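/- arXiv:2206.14778 — 7 statements merged into one kernel-verified Lean document; each statement's English description precedes it below -/
import Mathlib

section
/- Let S ⊆ {1,…,N}. Then S is Q_ℝ-redundant if and only if S^c is A_ℝ-saturated. -/
/-- `S` is `Q_ℝ`-redundant: there exist `c i ≠ 0` for `i ∈ S` with `∑_{i ∈ S} c i • q i = 0`.
We encode `c` as a function on all indices vanishing outside `S`. -/
def QRedundant {N k : ℕ} (q : Fin N → (Fin k → ℝ)) (S : Set (Fin N)) : Prop :=
  ∃ c : Fin N → ℝ, (∀ i ∈ S, c i ≠ 0) ∧ (∀ i ∉ S, c i = 0) ∧ ∑ i, c i • q i = 0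

/-- `S` is `A_ℝ`-saturated: there is a linear map `l : ℝ^m → ℝ` with `S = {i : l (a i) = 0}`. -/
def ASaturated {N m : ℕ} (a : Fin N → (Fin m → ℝ)) (S : Set (Fin N)) : Prop :=
  ∃ l : (Fin m → ℝ) →ₗ[ℝ] ℝ, S = {i | l (a i) = 0}

/-!
The vectors `c` with `∑ cᵢ qᵢ = 0` are exactly the vectors `(l(aᵢ))ᵢ` for linear forms `l`:
`∑ cᵢ qᵢ = 0` says that `c` is orthogonal to the column space of the matrix `(qᵢⱼ)`, which by
exactness is the space of linear relations among the `aᵢ`; and a linear form on `K^ι` killing every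
relation among the `aᵢ` factors through `t ↦ ∑ tᵢ aᵢ`. Taking zero sets on both sides gives the
theorem, since `S` is `Q`-redundant exactly when `Sᶜ` is the zero set of some such `c`.
-/

open Matrix

variable {K ι : Type*} [Field K] [Fintype ι]

theorem LinearMap.exists_comp_eq_iff_ker_le {V W : Type*} [AddCommGroup V] [Module K V]
    [AddCommGroup W] [Module K W] (f : V →ₗ[K] W) (φ : Module.Dual K V) :
    (∃ l : Module.Dual K W, l ∘ₗ f = φ) ↔ LinearMap.ker f ≤ LinearMap.ker φ := by
  have h := SetLike.ext_iff.mp (LinearMap.range_dualMap_eq_dualAnnihilator_ker f) φ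
  simpa only [LinearMap.mem_range, LinearMap.dualMap_apply', Submodule.mem_dualAnnihilator,
    ← LinearMap.mem_ker, SetLike.le_def] using h

theorem Matrix.vecMul_eq_zero_iff_forall_dotProduct_mulVec {R κ : Type*} [CommSemiring R]
    [Fintype κ] (A : Matrix ι κ R) (c : ι → R) :
    c ᵥ* A = 0 ↔ ∀ x, c ⬝ᵥ A *ᵥ x = 0 := by
  classical
  simp_rw [dotProduct_mulVec]
  refine ⟨fun h x => by rw [h, zero_dotProduct], fun h => funext fun j => ?_⟩
  simpa using h (Pi.single j 1)

theorem LinearMap.comp_linearCombination_eq_iff {M : Type*} [AddCommGroup M] [Module K M]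
    (l : Module.Dual K M) (a : ι → M) (c : ι → K) :
    l ∘ₗ Fintype.linearCombination K a = Fintype.linearCombination K c ↔ ∀ i, l (a i) = c i := by
  classical
  constructor
  · intro h i
    simpa using congr($h (Pi.single i 1))
  · intro h
    refine (Pi.basisFun K ι).ext fun i => ?_
    simp [h]

theorem sum_smul_eq_zero_iff_exists_dual {κ M : Type*} [Fintype κ] [AddCommGroup M] [Module K M]
    {q : ι → κ → K} {a : ι → M}
    (hexact : ∀ c : ι → K, (∑ i, c i • a i = 0) ↔ ∃ lam : κ → K, ∀ i, c i = ∑ j, q i j * lam j)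
    (c : ι → K) :
    ∑ i, c i • q i = 0 ↔ ∃ l : Module.Dual K M, ∀ i, c i = l (a i) := by
  have ker_eq :
      LinearMap.ker (Fintype.linearCombination K a) = LinearMap.range (of q).mulVecLin := by
    ext t
    simp only [LinearMap.mem_ker, Fintype.linearCombination_apply, hexact, LinearMap.mem_range,
      mulVecLin_apply, funext_iff, mulVec, dotProduct, of_apply, eq_comm]
  calc ∑ i, c i • q i = 0 ↔ ∀ x, c ⬝ᵥ of q *ᵥ x = 0 := by
        rw [← vecMul_eq_zero_iff_forall_dotProduct_mulVec, vecMul_eq_sum]; rfl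
    _ ↔ LinearMap.ker (Fintype.linearCombination K a) ≤
          LinearMap.ker (Fintype.linearCombination K c) := by
        simp only [ker_eq, LinearMap.range_le_iff_comap, Submodule.eq_top_iff', Submodule.mem_comap,
          LinearMap.mem_ker, mulVecLin_apply, Fintype.linearCombination_apply, smul_eq_mul,
          dotProduct, mul_comm]
    _ ↔ ∃ l : Module.Dual K M, l ∘ₗ Fintype.linearCombination K a = Fintype.linearCombination K c :=
        (LinearMap.exists_comp_eq_iff_ker_le _ _).symm
    _ ↔ ∃ l : Module.Dual K M, ∀ i, c i = l (a i) := by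
        simp_rw [LinearMap.comp_linearCombination_eq_iff, eq_comm]

theorem qRedundant_iff_exists_compl_eq_zeroSet {N k : ℕ} (q : Fin N → (Fin k → ℝ))
    (S : Set (Fin N)) :
    QRedundant q S ↔ ∃ c : Fin N → ℝ, Sᶜ = {i | c i = 0} ∧ ∑ i, c i • q i = 0 := by
  refine exists_congr fun c => ?_
  rw [← and_assoc, Set.ext_iff]
  refine and_congr_left' ⟨fun ⟨hS, hSc⟩ i => ⟨hSc i, fun h hi => hS i hi h⟩, fun h => ?_⟩
  exact ⟨fun i hi hc => (h i).2 hc hi, fun i hi => (h i).1 hi⟩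

theorem qRedundant_iff_compl_aSaturated_general
    {N k m : ℕ}
    (q : Fin N → (Fin k → ℝ)) (a : Fin N → (Fin m → ℝ))
    (hexact : ∀ c : Fin N → ℝ,
      (∑ i, c i • a i = 0) ↔ ∃ lam : Fin k → ℝ, ∀ i, c i = ∑ j, q i j * lam j)
    (S : Set (Fin N)) :
    QRedundant q S ↔ ASaturated a Sᶜ := by
  simp_rw [qRedundant_iff_exists_compl_eq_zeroSet, sum_smul_eq_zero_iff_exists_dual hexact]
  constructor
  · rintro ⟨c, hS, l, hl⟩
    exact ⟨l, by simpa only [hl] using hS⟩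
  · rintro ⟨l, hl⟩
    exact ⟨fun i => l (a i), hl, l, fun _ => rfl⟩

/-- Gale duality: `S ⊆ [N]` is `Q_ℝ`-redundant iff its complement is `A_ℝ`-saturated. -/
theorem qRedundant_iff_compl_aSaturated
    {N k m : ℕ} (hN : 1 ≤ N)
    (q : Fin N → (Fin k → ℝ)) (a : Fin N → (Fin m → ℝ))
    (hq : Submodule.span ℝ (Set.range q) = ⊤)
    (ha : Submodule.span ℝ (Set.range a) = ⊤)
    (hexact : ∀ c : Fin N → ℝ,
      (∑ i, c i • a i = 0) ↔ ∃ lam : Fin k → ℝ, ∀ i, c i = ∑ j, q i j * lam j)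
    (S : Set (Fin N)) :
    QRedundant q S ↔ ASaturated a Sᶜ :=
  qRedundant_iff_compl_aSaturated_general q a hexact S
end

section
/- If F is a minimal face of Π, then the subspace H := span_ℝ{q_i : i ∉ [N]_F} of ℝ^k is a relevant subspace, and [N]_H = {1,…,N} \ [N]_F. -/
/-- `S` is `A_ℝ`-redundant: there exist `c i ≠ 0` for `i ∈ S` with `∑_{i ∈ S} c i • a i = 0`. -/
def ARedundant {N m : ℕ} (a : Fin N → (Fin m → ℝ)) (S : Set (Fin N)) : Prop :=
  ∃ c : Fin N → ℝ, (∀ i ∈ S, c i ≠ 0) ∧ (∀ i ∉ S, c i = 0) ∧ ∑ i, c i • a i = 0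

/-- `S` is `Q_ℝ`-saturated. -/
def QSaturated {N k : ℕ} (q : Fin N → (Fin k → ℝ)) (S : Set (Fin N)) : Prop :=
  ∃ l : (Fin k → ℝ) →ₗ[ℝ] ℝ, S = {i | l (q i) = 0}

/-- `S` is `Q_ℝ`-positively-redundant. -/
def QPosRedundant {N k : ℕ} (q : Fin N → (Fin k → ℝ)) (S : Set (Fin N)) : Prop :=
  ∃ c : Fin N → ℝ, (∀ i ∈ S, 0 < c i) ∧ (∀ i ∉ S, c i = 0) ∧ ∑ i, c i • q i = 0

/-- The polytope `Π = conv({0, a_1, …, a_N})`. -/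
def PolyPi {N m : ℕ} (a : Fin N → (Fin m → ℝ)) : Set (Fin m → ℝ) :=
  convexHull ℝ (insert 0 (Set.range a))

/-- A face of `Π` is `Π ∩ l⁻¹(0)` for a linear map `l` that is nonnegative on `Π`. -/
def IsFace {N m : ℕ} (a : Fin N → (Fin m → ℝ)) (F : Set (Fin m → ℝ)) : Prop :=
  ∃ l : (Fin m → ℝ) →ₗ[ℝ] ℝ, (∀ x ∈ PolyPi a, 0 ≤ l x) ∧ F = PolyPi a ∩ {x | l x = 0}

/-- `[N]_F = {i : a i ∈ F}`. -/
def faceIdx {N m : ℕ} (a : Fin N → (Fin m → ℝ)) (F : Set (Fin m → ℝ)) : Set (Fin N) :=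
  {i | a i ∈ F}

/-- `F` is a minimal face of `Π` if it is a face and `[N]_F` is `A_ℝ`-redundant. -/
def IsMinimalFace {N m : ℕ} (a : Fin N → (Fin m → ℝ)) (F : Set (Fin m → ℝ)) : Prop :=
  IsFace a F ∧ ARedundant a (faceIdx a F)

/-- `H` is weight-supported: `H = span_ℝ {q i : q i ∈ H}`. -/
def WeightSupported {N k : ℕ} (q : Fin N → (Fin k → ℝ)) (H : Submodule ℝ (Fin k → ℝ)) : Prop :=
  H = Submodule.span ℝ {v | ∃ i, q i = v ∧ v ∈ H}

/-- `[N]_H = {i : q i ∈ H}`. -/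
def subspIdx {N k : ℕ} (q : Fin N → (Fin k → ℝ)) (H : Submodule ℝ (Fin k → ℝ)) : Set (Fin N) :=
  {i | q i ∈ H}

/-- `H` is a relevant subspace: weight-supported and `[N]_H` is both
`Q_ℝ`-positively-redundant and `Q_ℝ`-saturated. -/
def IsRelevant {N k : ℕ} (q : Fin N → (Fin k → ℝ)) (H : Submodule ℝ (Fin k → ℝ)) : Prop :=
  WeightSupported q H ∧ QPosRedundant q (subspIdx q H) ∧ QSaturated q (subspIdx q H)

/-- If `F` is a minimal face of `Π`, then `H := span_ℝ {q i : i ∉ [N]_F}` is a relevant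
subspace and `[N]_H = [N]_Fᶜ`. -/
theorem minimalFace_gives_relevant
    {N k m : ℕ} (hN : 1 ≤ N)
    (q : Fin N → (Fin k → ℝ)) (a : Fin N → (Fin m → ℝ))
    (hq : Submodule.span ℝ (Set.range q) = ⊤)
    (ha : Submodule.span ℝ (Set.range a) = ⊤)
    (hexact : ∀ c : Fin N → ℝ,
      (∑ i, c i • a i = 0) ↔ ∃ lam : Fin k → ℝ, ∀ i, c i = ∑ j, q i j * lam j)
    (F : Set (Fin m → ℝ)) (hF : IsMinimalFace a F) :
    IsRelevant q (Submodule.span ℝ (q '' (faceIdx a F)ᶜ)) ∧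
      subspIdx q (Submodule.span ℝ (q '' (faceIdx a F)ᶜ)) = (faceIdx a F)ᶜ := by
  obtain ⟨⟨l, hl0, hlF⟩, c, hcS, hcSc, hcsum⟩ := hF
  obtain ⟨lam, hlam⟩ := (hexact c).mp hcsum
  set S := faceIdx a F with hSdef
  let lq : (Fin k → ℝ) →ₗ[ℝ] ℝ :=
    { toFun := fun x => ∑ j, x j * lam j
      map_add' := fun x y => by
        simp [add_mul, Finset.sum_add_distrib]
      map_smul' := fun r x => by
        simp [Finset.mul_sum, mul_assoc] }
  have hlq : ∀ i, lq (q i) = c i := fun i => (hlam i).symm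
  have haPi : ∀ i, a i ∈ PolyPi a := fun i =>
    subset_convexHull ℝ _ (Set.mem_insert_iff.mpr (Or.inr ⟨i, rfl⟩))
  have hmem : ∀ i, i ∈ S ↔ l (a i) = 0 := by
    intro i
    constructor
    · intro hi
      have hi' : a i ∈ F := hi
      rw [hlF] at hi'
      exact hi'.2
    · intro hi
      have : a i ∈ F := by rw [hlF]; exact ⟨haPi i, hi⟩
      exact this
  have hSpan_le : Submodule.span ℝ (q '' Sᶜ) ≤ LinearMap.ker lq := by
    rw [Submodule.span_le]
    rintro v ⟨i, hi, rfl⟩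
    simp only [SetLike.mem_coe, LinearMap.mem_ker, hlq]
    exact hcSc i hi
  have hIdx : subspIdx q (Submodule.span ℝ (q '' Sᶜ)) = Sᶜ := by
    ext i
    simp only [subspIdx, Set.mem_setOf_eq, Set.mem_compl_iff]
    constructor
    · intro hi hiS
      have hker := hSpan_le hi
      rw [LinearMap.mem_ker, hlq] at hker
      exact hcS i hiS hker
    · intro hi
      exact Submodule.subset_span ⟨i, hi, rfl⟩
  have hcol : ∀ j, ∑ i, q i j • a i = 0 := by
    intro j
    apply (hexact _).mpr
    refine ⟨Pi.single j 1, fun i => ?_⟩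
    simp [Pi.single_apply, mul_ite]
  have hsum0 : ∑ i, l (a i) • q i = 0 := by
    funext j
    have h1 := congrArg l (hcol j)
    rw [map_sum] at h1
    simp only [map_smul, smul_eq_mul, map_zero] at h1
    simp only [Finset.sum_apply, Pi.smul_apply, smul_eq_mul, Pi.zero_apply]
    calc ∑ i, l (a i) * q i j = ∑ i, q i j * l (a i) := by
          simp [mul_comm]
      _ = 0 := h1
  refine ⟨⟨?_, ?_, ?_⟩, hIdx⟩
  · -- WeightSupported
    apply le_antisymm
    · apply Submodule.span_le.mpr
      rintro v ⟨i, hi, rfl⟩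
      exact Submodule.subset_span ⟨i, rfl, Submodule.subset_span ⟨i, hi, rfl⟩⟩
    · apply Submodule.span_le.mpr
      rintro v ⟨i, rfl, hv⟩
      exact hv
  · -- QPosRedundant
    refine ⟨fun i => l (a i), ?_, ?_, hsum0⟩
    · intro i hi
      rw [hIdx, Set.mem_compl_iff] at hi
      rcases lt_or_eq_of_le (hl0 (a i) (haPi i)) with h | h
      · exact h
      · exact absurd ((hmem i).mpr h.symm) hi
    · intro i hi
      rw [hIdx, Set.mem_compl_iff, not_not] at hi
      exact (hmem i).mp hi
  · -- QSaturated
    refine ⟨lq, ?_⟩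
    rw [hIdx]
    ext i
    simp only [Set.mem_compl_iff, Set.mem_setOf_eq, hlq]
    constructor
    · exact hcSc i
    · intro h hiS
      exact hcS i hiS h
end

section
/- The assignment F ↦ span_ℝ{q_i : i ∉ [N]_F} is a bijection from the set of minimal faces of Π onto the set of relevant subspaces of ℝ^k; moreover, if the minimal face F corresponds to the relevant subspace H under this bijection, then [N]_F = {1,…,N} \ [N]_H. -/
/-!
Under Gale duality the vectors `(l (a i))ᵢ`, for linear forms `l` on `ℝ^m`, are exactly the linear
dependencies among the `q i`, and the relations among the `a i` are exactly the vectors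
`(φ (q i))ᵢ` for linear forms `φ` on `ℝ^k`. Hence a supporting form `l ≥ 0` of a face `F` is the
same thing as a positive dependency among the `q i` supported on `T = [N]_Fᶜ`, and a relation
among the `a i` with support exactly `[N]_F` is the same thing as a form `φ` vanishing on the `q i`
exactly for `i ∈ T`. So minimal faces correspond to the index sets `T` that are positively
redundant and saturated. Saturation gives `[N]_H = T` for `H = span {q i : i ∈ T}`, which makes
`T ↦ H` a bijection onto the relevant subspaces, and a face is recovered from `[N]_F` as the convex
hull of `0` and the `a i` it contains.
-/

theorem exists_dual_apply_eq_iff_exists_coords {K ι κ : Type*} [Field K] [Fintype κ]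
    [DecidableEq κ] (q : ι → κ → K) (d : ι → K) :
    (∃ φ : Module.Dual K (κ → K), ∀ i, φ (q i) = d i) ↔
      ∃ lam : κ → K, ∀ i, d i = ∑ j, q i j * lam j := by
  constructor
  · rintro ⟨φ, hφ⟩
    refine ⟨fun j => φ fun l => if j = l then 1 else 0, fun i => ?_⟩
    rw [← hφ, LinearMap.pi_apply_eq_sum_univ φ (q i)]
    rfl
  · rintro ⟨lam, hlam⟩
    exact ⟨Fintype.linearCombination K lam, fun i => by
      rw [hlam, Fintype.linearCombination_apply]; rfl⟩

theorem convexHull_inter_setOf_eq_zero {𝕜 E : Type*} [Field 𝕜] [LinearOrder 𝕜]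
    [IsStrictOrderedRing 𝕜] [AddCommGroup E] [Module 𝕜 E] {s : Set E} {l : E →ₗ[𝕜] 𝕜}
    (hl : ∀ x ∈ s, 0 ≤ l x) :
    convexHull 𝕜 s ∩ {x | l x = 0} = convexHull 𝕜 (s ∩ {x | l x = 0}) := by
  classical
  refine Set.Subset.antisymm ?_ ?_
  · rintro x ⟨hx, hlx⟩
    rw [convexHull_eq] at hx
    obtain ⟨ι, t, w, z, hw₀, hw₁, hz, rfl⟩ := hx
    have hsum : ∑ i ∈ t, w i * l (z i) = 0 := by
      rw [← hlx, Finset.centerMass_eq_of_sum_1 _ _ hw₁, map_sum]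
      simp only [map_smul, smul_eq_mul]
    have hterm := (Finset.sum_eq_zero_iff_of_nonneg fun i hi =>
      mul_nonneg (hw₀ i hi) (hl _ (hz i hi))).1 hsum
    rw [← Finset.centerMass_filter_ne_zero]
    refine Finset.centerMass_mem_convexHull _ (fun i hi => hw₀ i (Finset.mem_filter.1 hi).1)
      (by rw [Finset.sum_filter_ne_zero, hw₁]; exact one_pos) fun i hi => ?_
    obtain ⟨hit, hwi⟩ := Finset.mem_filter.1 hi
    exact ⟨hz i hit, (mul_eq_zero.1 (hterm i hit)).resolve_left hwi⟩
  · exact convexHull_min (Set.inter_subset_inter_left _ (subset_convexHull 𝕜 s))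
      ((convex_convexHull 𝕜 s).inter (convex_hyperplane l.isLinear 0))

section GaleDuality

variable {K ι V W : Type*} [Field K] [Fintype ι] [AddCommGroup V] [Module K V]
  [AddCommGroup W] [Module K W] {q : ι → V} {a : ι → W}

theorem sum_dual_apply_smul_eq_zero
    (hGale : ∀ d : ι → K, ∑ i, d i • a i = 0 ↔ ∃ φ : Module.Dual K V, ∀ i, φ (q i) = d i)
    (ψ : Module.Dual K W) : ∑ i, ψ (a i) • q i = 0 := by
  refine (Module.forall_dual_apply_eq_zero_iff K _).1 fun φ => ?_
  have hφ : ∑ i, φ (q i) • a i = 0 := (hGale _).2 ⟨φ, fun _ => rfl⟩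
  calc φ (∑ i, ψ (a i) • q i) = ψ (∑ i, φ (q i) • a i) := by
        simp only [map_sum, map_smul, smul_eq_mul, mul_comm]
    _ = 0 := by rw [hφ, map_zero]

theorem exists_dual_apply_eq_of_sum_smul_eq_zero
    (hGale : ∀ d : ι → K, ∑ i, d i • a i = 0 ↔ ∃ φ : Module.Dual K V, ∀ i, φ (q i) = d i)
    {c : ι → K} (hc : ∑ i, c i • q i = 0) : ∃ ψ : Module.Dual K W, ∀ i, ψ (a i) = c i := by
  classical
  -- `t ↦ ∑ tᵢ cᵢ` vanishes on the relations among the `a i`, so it factors through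
  -- `A : t ↦ ∑ tᵢ • a i`.
  set A : (ι → K) →ₗ[K] W := Fintype.linearCombination K a
  have hker : Fintype.linearCombination K c ∈ (LinearMap.ker A).dualAnnihilator := by
    refine (Submodule.mem_dualAnnihilator _).2 fun t ht => ?_
    obtain ⟨φ, hφ⟩ := (hGale t).1 ht
    calc Fintype.linearCombination K c t = φ (∑ i, c i • q i) := by
          simp only [Fintype.linearCombination_apply, map_sum, map_smul, hφ, smul_eq_mul,
            mul_comm]
      _ = 0 := by rw [hc, map_zero]
  obtain ⟨ψ, hψ⟩ := (LinearMap.range_dualMap_eq_dualAnnihilator_ker A ▸ hker :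
    Fintype.linearCombination K c ∈ LinearMap.range A.dualMap)
  refine ⟨ψ, fun i => ?_⟩
  simpa [A] using LinearMap.congr_fun hψ (Pi.single i 1)

end GaleDuality

section Faces

variable {N k m : ℕ} {q : Fin N → Fin k → ℝ} {a : Fin N → Fin m → ℝ}

lemma apply_mem_polyPi (i : Fin N) : a i ∈ PolyPi a :=
  subset_convexHull ℝ _ (Set.mem_insert_of_mem _ ⟨i, rfl⟩)

lemma faceIdx_polyPi_inter (l : (Fin m → ℝ) →ₗ[ℝ] ℝ) :
    faceIdx a (PolyPi a ∩ {x | l x = 0}) = {i | l (a i) = 0} :=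
  Set.ext fun i => and_iff_right (apply_mem_polyPi i)

lemma IsFace.eq_convexHull_faceIdx {F : Set (Fin m → ℝ)} (hF : IsFace a F) :
    F = convexHull ℝ (insert 0 (a '' faceIdx a F)) := by
  obtain ⟨l, hl, rfl⟩ := hF
  have hgen : ∀ x ∈ insert 0 (Set.range a), 0 ≤ l x :=
    fun x hx => hl x (subset_convexHull ℝ _ hx)
  rw [faceIdx_polyPi_inter, PolyPi, convexHull_inter_setOf_eq_zero hgen]
  congr 1
  ext x
  simp only [Set.mem_inter_iff, Set.mem_insert_iff, Set.mem_range, Set.mem_image,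
    Set.mem_ofPred_eq]
  constructor
  · rintro ⟨rfl | ⟨i, rfl⟩, hx⟩
    exacts [Or.inl rfl, Or.inr ⟨i, hx, rfl⟩]
  · rintro (rfl | ⟨i, hi, rfl⟩)
    exacts [⟨Or.inl rfl, map_zero l⟩, ⟨Or.inr ⟨i, rfl⟩, hi⟩]

lemma exists_isFace_faceIdx_eq_iff
    (hGale : ∀ d : Fin N → ℝ,
      ∑ i, d i • a i = 0 ↔ ∃ φ : Module.Dual ℝ (Fin k → ℝ), ∀ i, φ (q i) = d i)
    (S : Set (Fin N)) : (∃ F, IsFace a F ∧ faceIdx a F = S) ↔ QPosRedundant q Sᶜ := by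
  constructor
  · rintro ⟨_, ⟨l, hl, rfl⟩, rfl⟩
    rw [faceIdx_polyPi_inter]
    exact ⟨fun i => l (a i), fun i hi => (hl _ (apply_mem_polyPi i)).lt_of_ne' hi,
      fun i hi => not_not.1 hi, sum_dual_apply_smul_eq_zero hGale l⟩
  · rintro ⟨c, hpos, hzero, hsum⟩
    obtain ⟨l, hl⟩ := exists_dual_apply_eq_of_sum_smul_eq_zero hGale hsum
    have hnonneg : ∀ x ∈ PolyPi a, 0 ≤ l x := by
      refine fun x hx => convexHull_min ?_ (convex_halfSpace_ge l.isLinear 0) hx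
      rintro _ (rfl | ⟨i, rfl⟩)
      · simp
      · by_cases hi : i ∈ S
        · simp [hl, hzero i (not_not.2 hi)]
        · simpa [hl] using (hpos i hi).le
    refine ⟨_, ⟨l, hnonneg, rfl⟩, ?_⟩
    rw [faceIdx_polyPi_inter]
    ext i
    simp only [Set.mem_ofPred_eq, hl]
    exact ⟨fun h => by_contra fun hi => (hpos i hi).ne' h, fun hi => hzero i (not_not.2 hi)⟩

lemma aRedundant_iff_qSaturated_compl
    (hGale : ∀ d : Fin N → ℝ,
      ∑ i, d i • a i = 0 ↔ ∃ φ : Module.Dual ℝ (Fin k → ℝ), ∀ i, φ (q i) = d i)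
    (S : Set (Fin N)) : ARedundant a S ↔ QSaturated q Sᶜ := by
  constructor
  · rintro ⟨d, hne, hzero, hsum⟩
    obtain ⟨φ, hφ⟩ := (hGale d).1 hsum
    refine ⟨φ, Set.ext fun i => ?_⟩
    simp only [Set.mem_compl_iff, Set.mem_ofPred_eq, hφ]
    exact ⟨hzero i, fun h hi => hne i hi h⟩
  · rintro ⟨φ, hφ⟩
    refine ⟨fun i => φ (q i), fun i hi h => ?_, fun i hi => ?_, (hGale _).2 ⟨φ, fun _ => rfl⟩⟩
    · exact (hφ ▸ h : i ∈ Sᶜ) hi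
    · exact (hφ ▸ hi : i ∈ {i | φ (q i) = 0})

lemma weightSupported_iff {H : Submodule ℝ (Fin k → ℝ)} :
    WeightSupported q H ↔ Submodule.span ℝ (q '' subspIdx q H) = H := by
  have hgen : {v | ∃ i, q i = v ∧ v ∈ H} = q '' subspIdx q H := by
    ext v
    constructor
    · rintro ⟨i, rfl, hi⟩
      exact ⟨i, hi, rfl⟩
    · rintro ⟨i, hi, rfl⟩
      exact ⟨i, rfl, hi⟩
  rw [WeightSupported, hgen, eq_comm]

lemma QSaturated.subspIdx_span_image {T : Set (Fin N)} (hT : QSaturated q T) :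
    subspIdx q (Submodule.span ℝ (q '' T)) = T := by
  obtain ⟨l, rfl⟩ := hT
  refine Set.Subset.antisymm (fun i hi => ?_) fun i hi => Submodule.subset_span ⟨i, hi, rfl⟩
  have hker : Submodule.span ℝ (q '' {i | l (q i) = 0}) ≤ LinearMap.ker l :=
    Submodule.span_le.2 <| Set.image_subset_iff.2 fun j hj => hj
  exact hker hi

lemma QSaturated.isRelevant_span_image {T : Set (Fin N)} (hT : QSaturated q T)
    (hpos : QPosRedundant q T) : IsRelevant q (Submodule.span ℝ (q '' T)) := by
  rw [IsRelevant, weightSupported_iff, hT.subspIdx_span_image]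
  exact ⟨rfl, hpos, hT⟩

end Faces

theorem minimalFace_relevant_bijection_general
    {N k m : ℕ}
    (q : Fin N → (Fin k → ℝ)) (a : Fin N → (Fin m → ℝ))
    (hexact : ∀ c : Fin N → ℝ,
      (∑ i, c i • a i = 0) ↔ ∃ lam : Fin k → ℝ, ∀ i, c i = ∑ j, q i j * lam j) :
    Set.BijOn (fun F : Set (Fin m → ℝ) => Submodule.span ℝ (q '' (faceIdx a F)ᶜ))
        {F | IsMinimalFace a F} {H | IsRelevant q H} ∧
      ∀ F, IsMinimalFace a F →
        faceIdx a F = (subspIdx q (Submodule.span ℝ (q '' (faceIdx a F)ᶜ)))ᶜ := by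
  have hGale : ∀ d : Fin N → ℝ,
      ∑ i, d i • a i = 0 ↔ ∃ φ : Module.Dual ℝ (Fin k → ℝ), ∀ i, φ (q i) = d i :=
    fun d => (hexact d).trans (exists_dual_apply_eq_iff_exists_coords q d).symm
  have hsat : ∀ F, IsMinimalFace a F → QSaturated q (faceIdx a F)ᶜ :=
    fun F hF => (aRedundant_iff_qSaturated_compl hGale _).1 hF.2
  have hidx : ∀ F, IsMinimalFace a F →
      faceIdx a F = (subspIdx q (Submodule.span ℝ (q '' (faceIdx a F)ᶜ)))ᶜ :=
    fun F hF => by rw [(hsat F hF).subspIdx_span_image, compl_compl]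
  refine ⟨⟨fun F hF => ?_, fun F hF G hG hFG => ?_, fun H hH => ?_⟩, hidx⟩
  · exact (hsat F hF).isRelevant_span_image
      ((exists_isFace_faceIdx_eq_iff hGale _).1 ⟨F, hF.1, rfl⟩)
  · have hFG' : faceIdx a F = faceIdx a G :=
      (hidx F hF).trans ((congrArg (fun H => (subspIdx q H)ᶜ) hFG).trans (hidx G hG).symm)
    rw [hF.1.eq_convexHull_faceIdx, hG.1.eq_convexHull_faceIdx, hFG']
  · obtain ⟨hws, hpos, hsatH⟩ := hH
    obtain ⟨F, hface, hFidx⟩ :=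
      (exists_isFace_faceIdx_eq_iff hGale (subspIdx q H)ᶜ).2 (by rwa [compl_compl])
    have hred : ARedundant a (faceIdx a F) := by
      rw [aRedundant_iff_qSaturated_compl hGale, hFidx, compl_compl]
      exact hsatH
    refine ⟨F, ⟨hface, hred⟩, ?_⟩
    change Submodule.span ℝ (q '' (faceIdx a F)ᶜ) = H
    rw [hFidx, compl_compl, weightSupported_iff.1 hws]

/-- The assignment `F ↦ span_ℝ {q i : i ∉ [N]_F}` is a bijection from minimal faces of `Π`
onto relevant subspaces of `ℝ^k`; moreover under this bijection `[N]_F = [N]_Hᶜ`. -/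
theorem minimalFace_relevant_bijection
    {N k m : ℕ} (hN : 1 ≤ N)
    (q : Fin N → (Fin k → ℝ)) (a : Fin N → (Fin m → ℝ))
    (hq : Submodule.span ℝ (Set.range q) = ⊤)
    (ha : Submodule.span ℝ (Set.range a) = ⊤)
    (hexact : ∀ c : Fin N → ℝ,
      (∑ i, c i • a i = 0) ↔ ∃ lam : Fin k → ℝ, ∀ i, c i = ∑ j, q i j * lam j) :
    Set.BijOn (fun F : Set (Fin m → ℝ) => Submodule.span ℝ (q '' (faceIdx a F)ᶜ))
        {F | IsMinimalFace a F} {H | IsRelevant q H} ∧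
      ∀ F, IsMinimalFace a F →
        faceIdx a F = (subspIdx q (Submodule.span ℝ (q '' (faceIdx a F)ᶜ)))ᶜ :=
  minimalFace_relevant_bijection_general q a hexact
end

section
/- The overgraph of ψ_b over Π equals the convex hull of the upward vertical rays over the points (a_i, b_i): that is, {(x, y) ∈ Π × ℝ : y ≥ ψ_b(x)} = conv( ⋃_{i=1}^{N+1} { (a_i, y) : y ≥ b_i } ) as subsets of ℝ^m × ℝ. -/
/-!
The hull of the rays is the Minkowski sum of the vertical half-line and the polytope spanned by
the points `(a i, b i)`, hence closed; the overgraph is convex and contains every ray because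
`φ_b(ξ) ≤ b i + ⟨a i, ξ⟩`. For the reverse inclusion, a closed convex set is the intersection of
the half-spaces `{l ≤ sup l}` containing it. Write `l (x, y) = g x + s y`. If `s ≥ 0`, the maximum
principle for `g` on `Π` yields a vertex `a i` with `g x ≤ g (a i)`, and a high enough point of
the ray over `a i` has `l`-value at least `l (x, y)`. If `s < 0`, the overgraph condition at
`ξ = g / s`, read at an index `i` attaining the minimum defining `φ_b(ξ)`, says exactly that
`l (x, y) ≤ l (a i, b i)`.
-/

/-- `φ_b(ξ) = min_{1 ≤ i ≤ N+1} (b i + ⟨a i, ξ⟩)`. -/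
noncomputable def phiB {N m : ℕ} (a : Fin (N + 1) → (Fin m → ℝ)) (b : Fin (N + 1) → ℝ)
    (ξ : Fin m → ℝ) : ℝ :=
  ⨅ i, (b i + ∑ j, a i j * ξ j)

/-- The overgraph `{(x,y) ∈ Π × ℝ : y ≥ ψ_b(x)}` of the Legendre transform
`ψ_b(η) = sup_ξ (φ_b(ξ) − ⟨η, ξ⟩)`; the condition `y ≥ ψ_b(x)` is expressed as
`y` being an upper bound of the defining family. -/
noncomputable def overgraph {N m : ℕ} (a : Fin (N + 1) → (Fin m → ℝ)) (b : Fin (N + 1) → ℝ) :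
    Set ((Fin m → ℝ) × ℝ) :=
  {p | p.1 ∈ convexHull ℝ (Set.range a) ∧
    ∀ ξ : Fin m → ℝ, phiB a b ξ - ∑ j, p.1 j * ξ j ≤ p.2}

open Set Pointwise

section UpperRays

variable {ι E : Type*}

def upperRays (a : ι → E) (b : ι → ℝ) : Set (E × ℝ) :=
  ⋃ i, {p | p.1 = a i ∧ b i ≤ p.2}

theorem mk_mem_upperRays (a : ι → E) (b : ι → ℝ) {i : ι} {y : ℝ} (hy : b i ≤ y) :
    (a i, y) ∈ upperRays a b :=
  mem_iUnion.2 ⟨i, rfl, hy⟩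

variable [AddCommGroup E] [Module ℝ E]

theorem convexHull_upperRays_eq_add (a : ι → E) (b : ι → ℝ) :
    convexHull ℝ (upperRays a b)
      = ({(0 : E)} ×ˢ Ici (0 : ℝ)) + convexHull ℝ (range fun i => (a i, b i)) := by
  refine Subset.antisymm (convexHull_min ?_ ?_) ?_
  · rintro p hp
    obtain ⟨i, hp₁, hp₂⟩ := mem_iUnion.1 hp
    have hsplit : p = (0, p.2 - b i) + (a i, b i) := by ext <;> simp [hp₁]
    rw [hsplit]
    exact add_mem_add ⟨rfl, sub_nonneg.2 hp₂⟩ (subset_convexHull ℝ _ (mem_range_self i))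
  · exact ((convex_singleton _).prod (convex_Ici _)).add (convex_convexHull ℝ _)
  · rintro q ⟨c, ⟨hc₁, hc₂⟩, k, hk, rfl⟩
    have hshift : c +ᵥ upperRays a b ⊆ upperRays a b := by
      rintro _ ⟨p, hp, rfl⟩
      obtain ⟨i, hp₁, hp₂⟩ := mem_iUnion.1 hp
      refine mem_iUnion.2 ⟨i, ?_, ?_⟩
      · simp [mem_singleton_iff.1 hc₁, hp₁]
      · show b i ≤ c.2 + p.2
        linarith [mem_Ici.1 hc₂]
    have hk' : k ∈ convexHull ℝ (upperRays a b) :=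
      convexHull_mono (range_subset_iff.2 fun i => mk_mem_upperRays a b le_rfl) hk
    have hck : c + k ∈ c +ᵥ convexHull ℝ (upperRays a b) := vadd_mem_vadd_set hk'
    rw [← convexHull_vadd] at hck
    exact convexHull_mono hshift hck

theorem isClosed_convexHull_upperRays [Finite ι] [TopologicalSpace E] [T1Space E]
    [IsTopologicalAddGroup E] [ContinuousSMul ℝ E] (a : ι → E) (b : ι → ℝ) :
    IsClosed (convexHull ℝ (upperRays a b)) := by
  rw [convexHull_upperRays_eq_add]
  exact (isClosed_singleton.prod isClosed_Ici).add_right_of_isCompact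
    ((finite_range _).isCompact_convexHull (𝕜 := ℝ))

end UpperRays

theorem LinearMap.apply_prod_eq_add_smul {E F : Type*} [AddCommGroup E] [Module ℝ E]
    [AddCommGroup F] [Module ℝ F] (l : E × ℝ →ₗ[ℝ] F) (x : E) (y : ℝ) :
    l (x, y) = l (x, 0) + y • l (0, 1) := by
  rw [← map_smul, ← map_add]
  simp

theorem LinearMap.exists_sum_mul_eq {ι R : Type*} [Fintype ι] [DecidableEq ι] [CommSemiring R]
    (g : (ι → R) →ₗ[R] R) : ∃ ξ : ι → R, ∀ x, ∑ j, x j * ξ j = g x :=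
  ⟨fun i => g fun j => if i = j then 1 else 0, fun x => by
    simp only [g.pi_apply_eq_sum_univ x, smul_eq_mul]⟩

section Legendre

variable {N m : ℕ} (a : Fin (N + 1) → (Fin m → ℝ)) (b : Fin (N + 1) → ℝ)

theorem phiB_le (ξ : Fin m → ℝ) (i : Fin (N + 1)) : phiB a b ξ ≤ b i + ∑ j, a i j * ξ j :=
  ciInf_le (finite_range _).bddBelow i

theorem exists_phiB_eq (ξ : Fin m → ℝ) : ∃ i, phiB a b ξ = b i + ∑ j, a i j * ξ j :=
  exists_eq_ciInf_of_finite.imp fun _ h => h.symm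

theorem convex_overgraph : Convex ℝ (overgraph a b) := by
  have hhalf (ξ : Fin m → ℝ) :
      Convex ℝ {p : (Fin m → ℝ) × ℝ | phiB a b ξ ≤ ∑ j, p.1 j * ξ j + p.2} :=
    convex_halfSpace_ge ⟨fun p q => by simp [add_mul, Finset.sum_add_distrib]; ring,
      fun c p => by simp [Finset.mul_sum, mul_add, mul_assoc]⟩ _
  have : overgraph a b = convexHull ℝ (range a) ×ˢ univ ∩
      ⋂ ξ, {p | phiB a b ξ ≤ ∑ j, p.1 j * ξ j + p.2} := by
    ext p; simp [overgraph, add_comm]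
  rw [this]
  exact ((convex_convexHull ℝ _).prod convex_univ).inter (convex_iInter hhalf)

theorem upperRays_subset_overgraph : upperRays a b ⊆ overgraph a b := by
  intro p hp
  obtain ⟨i, hp₁, hp₂⟩ := mem_iUnion.1 hp
  refine ⟨hp₁ ▸ subset_convexHull ℝ _ (mem_range_self i), fun ξ => ?_⟩
  rw [hp₁]
  linarith [phiB_le a b ξ i]

theorem overgraph_subset_convexHull_upperRays :
    overgraph a b ⊆ convexHull ℝ (upperRays a b) := by
  rintro ⟨x, y⟩ hp
  rw [← iInter_halfSpaces_eq (convex_convexHull ℝ _) (isClosed_convexHull_upperRays a b)]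
  refine mem_iInter.2 fun l => ?_
  set s := l (0, 1)
  set g := l.toLinearMap ∘ₗ LinearMap.inl ℝ (Fin m → ℝ) ℝ
  have hl (z : Fin m → ℝ) (t : ℝ) : l (z, t) = g z + t * s :=
    l.toLinearMap.apply_prod_eq_add_smul z t
  show ∃ q ∈ _, l (x, y) ≤ l q
  rcases le_or_gt 0 s with hs | hs
  · obtain ⟨_, ⟨i, rfl⟩, hi⟩ :=
      (g.convexOn convex_univ).exists_ge_of_mem_convexHull (subset_univ _) hp.1
    refine ⟨(a i, max (b i) y), subset_convexHull ℝ _ (mk_mem_upperRays a b (le_max_left _ _)),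
      ?_⟩
    rw [hl, hl]
    nlinarith [mul_le_mul_of_nonneg_right (le_max_right (b i) y) hs]
  · obtain ⟨ξ, hξ⟩ := (s⁻¹ • g).exists_sum_mul_eq
    obtain ⟨i, hi⟩ := exists_phiB_eq a b ξ
    refine ⟨(a i, b i), subset_convexHull ℝ _ (mk_mem_upperRays a b le_rfl), ?_⟩
    have h : b i + s⁻¹ * g (a i) - s⁻¹ * g x ≤ y := by simpa [hi, hξ] using hp.2 ξ
    have key : s * (b i + s⁻¹ * g (a i) - s⁻¹ * g x) = s * b i + g (a i) - g x := by
      rw [mul_sub, mul_add, mul_inv_cancel_left₀ hs.ne, mul_inv_cancel_left₀ hs.ne]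
    rw [hl, hl]
    linarith [mul_le_mul_of_nonpos_left h hs.le]

end Legendre

theorem overgraph_eq_convexHull_rays_general {N m : ℕ}
    (a : Fin (N + 1) → (Fin m → ℝ)) (b : Fin (N + 1) → ℝ) :
    overgraph a b
      = convexHull ℝ (⋃ i, {p : (Fin m → ℝ) × ℝ | p.1 = a i ∧ b i ≤ p.2}) := by
  change overgraph a b = convexHull ℝ (upperRays a b)
  exact (overgraph_subset_convexHull_upperRays a b).antisymm
    (convexHull_min (upperRays_subset_overgraph a b) (convex_overgraph a b))

/-- The overgraph of `ψ_b` over `Π` equals the convex hull of the upward vertical rays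
over the points `(a i, b i)`. -/
theorem overgraph_eq_convexHull_rays {N m : ℕ} (hN : 1 ≤ N)
    (a : Fin (N + 1) → (Fin m → ℝ)) (b : Fin (N + 1) → ℝ)
    (ha : a (Fin.last N) = 0) (hb : b (Fin.last N) = 0) :
    overgraph a b
      = convexHull ℝ (⋃ i, {p : (Fin m → ℝ) × ℝ | p.1 = a i ∧ b i ≤ p.2}) :=
  overgraph_eq_convexHull_rays_general a b
end

section
/- Let F be a face of Π, i.e., F = Π ∩ l^{-1}(0) for some linear map l: ℝ^m → ℝ with l ≥ 0 on Π, and let I_F = {i ∈ {1,…,N+1} : a_i ∈ F}. Then the restriction of ψ_b to F coincides with the Legendre transform computed using only the points on F: for every η ∈ F, sup_{ξ ∈ ℝ^m} ( min_{1 ≤ i ≤ N+1} ( b_i + ⟨a_i, ξ⟩ ) − ⟨η, ξ⟩ ) = sup_{ξ ∈ ℝ^m} ( min_{i ∈ I_F} ( b_i + ⟨a_i, ξ⟩ ) − ⟨η, ξ⟩ ), both sides being finite real numbers. -/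
noncomputable def minAffine {ι n : Type*} [Fintype n] (a : ι → n → ℝ) (b : ι → ℝ)
    (ξ : n → ℝ) : ℝ :=
  ⨅ i, b i + a i ⬝ᵥ ξ

lemma exists_apply_eq_zero_of_mem_convexHull {ι E : Type*} [AddCommGroup E] [Module ℝ E]
    {a : ι → E} {l : E →ₗ[ℝ] ℝ} (hl : ∀ i, 0 ≤ l (a i)) {η : E}
    (hη : η ∈ convexHull ℝ (Set.range a)) (hlη : l η = 0) : ∃ i, l (a i) = 0 := by
  by_contra! hne
  have hpos : Set.range a ⊆ {x | 0 < l x} :=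
    Set.range_subset_iff.2 fun i => (hl i).lt_of_ne (hne i).symm
  exact (convexHull_min hpos (convex_halfSpace_gt l.isLinear 0) hη).ne' hlη

lemma convex_setOf_bddAbove_range_sub_dotProduct {n : Type*} [Fintype n] (f : (n → ℝ) → ℝ) :
    Convex ℝ {η : n → ℝ | BddAbove (Set.range fun ξ => f ξ - η ⬝ᵥ ξ)} := by
  rintro η₁ ⟨B₁, hB₁⟩ η₂ ⟨B₂, hB₂⟩ s t hs ht hst
  refine ⟨s * B₁ + t * B₂, ?_⟩
  rintro _ ⟨ξ, rfl⟩
  have h₁ : f ξ - η₁ ⬝ᵥ ξ ≤ B₁ := hB₁ ⟨ξ, rfl⟩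
  have h₂ : f ξ - η₂ ⬝ᵥ ξ ≤ B₂ := hB₂ ⟨ξ, rfl⟩
  calc f ξ - (s • η₁ + t • η₂) ⬝ᵥ ξ
      = s * (f ξ - η₁ ⬝ᵥ ξ) + t * (f ξ - η₂ ⬝ᵥ ξ) := by
        rw [add_dotProduct, smul_dotProduct, smul_dotProduct, smul_eq_mul, smul_eq_mul]
        linear_combination (-f ξ) * hst
    _ ≤ s * B₁ + t * B₂ := by gcongr

section minAffine

variable {ι n : Type*} [Finite ι] [Fintype n] (a : ι → n → ℝ) (b : ι → ℝ)

lemma minAffine_le (ξ : n → ℝ) (i : ι) : minAffine a b ξ ≤ b i + a i ⬝ᵥ ξ :=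
  ciInf_le (Set.finite_range _).bddBelow i

lemma minAffine_le_minAffine_subtype {p : ι → Prop} [Nonempty {i // p i}] (ξ : n → ℝ) :
    minAffine a b ξ ≤ minAffine (fun i : {i // p i} => a i) (fun i => b i) ξ :=
  le_ciInf fun i => minAffine_le a b ξ i

lemma bddAbove_range_minAffine_sub_dotProduct {η : n → ℝ}
    (hη : η ∈ convexHull ℝ (Set.range a)) :
    BddAbove (Set.range fun ξ => minAffine a b ξ - η ⬝ᵥ ξ) := by
  refine convexHull_min ?_ (convex_setOf_bddAbove_range_sub_dotProduct _) hη
  rintro _ ⟨i, rfl⟩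
  refine ⟨b i, ?_⟩
  rintro _ ⟨ξ, rfl⟩
  linarith [minAffine_le a b ξ i]

lemma exists_minAffine_add_smul_eq {p : ι → Prop} [Nonempty {i // p i}] {ζ : n → ℝ}
    (hface : ∀ i, p i → a i ⬝ᵥ ζ = 0) (hoff : ∀ i, ¬ p i → 0 < a i ⬝ᵥ ζ) (ξ : n → ℝ) :
    ∃ T : ℝ, minAffine a b (ξ + T • ζ) =
      minAffine (fun i : {i // p i} => a i) (fun i => b i) ξ := by
  have : Nonempty ι := ‹Nonempty {i // p i}›.map Subtype.val
  set M := minAffine (fun i : {i // p i} => a i) (fun i => b i) ξ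
  obtain ⟨T, hT⟩ := (Set.finite_range fun i => (M - (b i + a i ⬝ᵥ ξ)) / (a i ⬝ᵥ ζ)).bddAbove
  have hshift : ∀ i, b i + a i ⬝ᵥ (ξ + T • ζ) = b i + a i ⬝ᵥ ξ + T * (a i ⬝ᵥ ζ) := fun i => by
    rw [dotProduct_add, dotProduct_smul, smul_eq_mul]; ring
  refine ⟨T, le_antisymm ?_ (le_ciInf fun i => ?_)⟩
  · obtain ⟨i, hi⟩ : ∃ i : {i // p i}, b i + a i ⬝ᵥ ξ = M := exists_eq_ciInf_of_finite
    calc minAffine a b (ξ + T • ζ) ≤ b i + a i ⬝ᵥ (ξ + T • ζ) := minAffine_le a b _ i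
      _ = M := by rw [hshift, hface i i.2, mul_zero, add_zero]; exact hi
  · rw [hshift]
    by_cases hi : p i
    · rw [hface i hi, mul_zero, add_zero]
      exact minAffine_le (fun i : {i // p i} => a i) (fun i => b i) ξ ⟨i, hi⟩
    · have := (div_le_iff₀ (hoff i hi)).1 (hT ⟨i, rfl⟩)
      linarith

lemma range_minAffine_subtype_sub_dotProduct_subset {p : ι → Prop} [Nonempty {i // p i}]
    {ζ η : n → ℝ} (hface : ∀ i, p i → a i ⬝ᵥ ζ = 0) (hoff : ∀ i, ¬ p i → 0 < a i ⬝ᵥ ζ)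
    (hη : η ⬝ᵥ ζ = 0) :
    (Set.range fun ξ => minAffine (fun i : {i // p i} => a i) (fun i => b i) ξ - η ⬝ᵥ ξ) ⊆
      Set.range fun ξ => minAffine a b ξ - η ⬝ᵥ ξ := by
  rintro _ ⟨ξ, rfl⟩
  obtain ⟨T, hT⟩ := exists_minAffine_add_smul_eq a b hface hoff ξ
  refine ⟨ξ + T • ζ, ?_⟩
  simp only [hT, dotProduct_add, dotProduct_smul, hη, smul_zero, add_zero]

lemma isCofinalFor_range_minAffine_subtype_sub_dotProduct {p : ι → Prop} [Nonempty {i // p i}]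
    (η : n → ℝ) :
    IsCofinalFor (Set.range fun ξ => minAffine a b ξ - η ⬝ᵥ ξ)
      (Set.range fun ξ => minAffine (fun i : {i // p i} => a i) (fun i => b i) ξ - η ⬝ᵥ ξ) := by
  rintro _ ⟨ξ, rfl⟩
  exact ⟨_, ⟨ξ, rfl⟩, sub_le_sub_right (minAffine_le_minAffine_subtype a b ξ) _⟩

end minAffine

theorem legendre_restrict_to_face_general {N m : ℕ}
    (a : Fin (N + 1) → (Fin m → ℝ)) (b : Fin (N + 1) → ℝ)
    (l : (Fin m → ℝ) →ₗ[ℝ] ℝ)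
    (hl : ∀ x ∈ convexHull ℝ (Set.range a), 0 ≤ l x)
    (F : Set (Fin m → ℝ)) (hF : F = convexHull ℝ (Set.range a) ∩ {x | l x = 0})
    (η : Fin m → ℝ) (hη : η ∈ F) :
    ∃ v : ℝ,
      IsLUB (Set.range fun ξ : Fin m → ℝ => phiB a b ξ - ∑ j, η j * ξ j) v ∧
      IsLUB (Set.range fun ξ : Fin m → ℝ =>
        sInf {r : ℝ | ∃ i, a i ∈ F ∧ r = b i + ∑ j, a i j * ξ j} - ∑ j, η j * ξ j) v := by
  obtain ⟨hηhull, hlη : l η = 0⟩ := hF ▸ hη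
  have hla : ∀ i, 0 ≤ l (a i) := fun i => hl _ (subset_convexHull ℝ _ ⟨i, rfl⟩)
  have hmem : ∀ i, a i ∈ F ↔ l (a i) = 0 := fun i => by
    rw [hF]; exact and_iff_right (subset_convexHull ℝ _ ⟨i, rfl⟩)
  obtain ⟨ζ, hζ⟩ : ∃ ζ, ∀ x, l x = x ⬝ᵥ ζ := ⟨(dotProductEquiv ℝ (Fin m)).symm l, fun x => by
    rw [dotProduct_comm, ← dotProductEquiv_apply_apply, LinearEquiv.apply_symm_apply]⟩
  have hface : ∀ i, a i ∈ F → a i ⬝ᵥ ζ = 0 := fun i hi => (hζ _).symm.trans ((hmem i).1 hi)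
  have hoff : ∀ i, a i ∉ F → 0 < a i ⬝ᵥ ζ := fun i hi =>
    hζ (a i) ▸ (hla i).lt_of_ne (Ne.symm (mt (hmem i).2 hi))
  obtain ⟨i₀, hi₀⟩ := exists_apply_eq_zero_of_mem_convexHull hla hηhull hlη
  have : Nonempty {i // a i ∈ F} := ⟨⟨i₀, (hmem i₀).2 hi₀⟩⟩
  have hsInf : ∀ ξ, sInf {r : ℝ | ∃ i, a i ∈ F ∧ r = b i + ∑ j, a i j * ξ j} =
      minAffine (fun i : {i // a i ∈ F} => a i) (fun i => b i) ξ := fun ξ =>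
    congr_arg sInf <| Set.ext fun r =>
      ⟨fun ⟨i, hi, h⟩ => ⟨⟨i, hi⟩, h.symm⟩, fun ⟨⟨i, hi⟩, h⟩ => ⟨i, hi, h.symm⟩⟩
  have hlub : IsLUB (Set.range fun ξ => minAffine a b ξ - η ⬝ᵥ ξ) _ :=
    isLUB_csSup (Set.range_nonempty _) (bddAbove_range_minAffine_sub_dotProduct a b hηhull)
  refine ⟨_, hlub, ?_⟩
  simp only [hsInf]
  exact hlub.of_isCofinalFor
    (range_minAffine_subtype_sub_dotProduct_subset a b hface hoff (by rw [← hζ, hlη]))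
    (isCofinalFor_range_minAffine_subtype_sub_dotProduct a b η)

/-- The restriction of the Legendre transform `ψ_b` to a face `F` of `Π` coincides with
the Legendre transform computed using only the points `a i ∈ F`: for `η ∈ F`, the two
suprema over `ξ` have the same (finite) least upper bound. -/
theorem legendre_restrict_to_face {N m : ℕ} (hN : 1 ≤ N)
    (a : Fin (N + 1) → (Fin m → ℝ)) (b : Fin (N + 1) → ℝ)
    (ha : a (Fin.last N) = 0) (hb : b (Fin.last N) = 0)
    (l : (Fin m → ℝ) →ₗ[ℝ] ℝ)
    (hl : ∀ x ∈ convexHull ℝ (Set.range a), 0 ≤ l x)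
    (F : Set (Fin m → ℝ)) (hF : F = convexHull ℝ (Set.range a) ∩ {x | l x = 0})
    (η : Fin m → ℝ) (hη : η ∈ F) :
    ∃ v : ℝ,
      IsLUB (Set.range fun ξ : Fin m → ℝ => phiB a b ξ - ∑ j, η j * ξ j) v ∧
      IsLUB (Set.range fun ξ : Fin m → ℝ =>
        sInf {r : ℝ | ∃ i, a i ∈ F ∧ r = b i + ∑ j, a i j * ξ j} - ∑ j, η j * ξ j) v :=
  legendre_restrict_to_face_general a b l hl F hF η hη
end

section
/- The following are equivalent: (i) 0 ∈ conv{a_1, …, a_N}; (ii) the convex cone generated by q_1, …, q_N is not all of ℝ^k; (iii) conv(S) = conv(S_+), where S = { Σ_{i=1}^N v_i a_i : v ∈ ℤ_{≥0}^N } and S_+ = { Σ_{i=1}^N v_i a_i : v ∈ ℤ_{≥0}^N, v ≠ 0 }. -/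
/-- The convex cone generated by the weights `q_1, …, q_N`. -/
def weightCone {N k : ℕ} (q : Fin N → (Fin k → ℝ)) : Set (Fin k → ℝ) :=
  {x | ∃ t : Fin N → ℝ, (∀ i, 0 ≤ t i) ∧ x = ∑ i, t i • q i}

/-- `S = { Σ v_i a_i : v ∈ ℤ_{≥0}^N }`. -/
def latticeImage {N m : ℕ} (a : Fin N → (Fin m → ℝ)) : Set (Fin m → ℝ) :=
  {x | ∃ v : Fin N → ℕ, x = ∑ i, (v i : ℝ) • a i}

/-- `S_+ = { Σ v_i a_i : v ∈ ℤ_{≥0}^N, v ≠ 0 }`. -/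
def latticeImagePos {N m : ℕ} (a : Fin N → (Fin m → ℝ)) : Set (Fin m → ℝ) :=
  {x | ∃ v : Fin N → ℕ, v ≠ 0 ∧ x = ∑ i, (v i : ℝ) • a i}

private lemma dot_zero_of_span {N k : ℕ} {q : Fin N → (Fin k → ℝ)}
    (hq : Submodule.span ℝ (Set.range q) = ⊤) {lam : Fin k → ℝ}
    (h : ∀ i, ∑ j, q i j * lam j = 0) : lam = 0 := by
  set f : (Fin k → ℝ) →ₗ[ℝ] ℝ :=
    { toFun := fun x => ∑ j, x j * lam j
      map_add' := fun x y => by simp [add_mul, Finset.sum_add_distrib]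
      map_smul' := fun c x => by simp [Finset.mul_sum, mul_assoc] } with hf
  have hker : Submodule.span ℝ (Set.range q) ≤ LinearMap.ker f := by
    rw [Submodule.span_le]
    rintro x ⟨i, rfl⟩
    exact LinearMap.mem_ker.mpr (h i)
  rw [hq] at hker
  have hl : ∑ j, lam j * lam j = 0 := hker (Submodule.mem_top)
  funext j
  exact mul_self_eq_zero.mp
    ((Finset.sum_eq_zero_iff_of_nonneg (fun j _ => mul_self_nonneg (lam j))).mp hl j
      (Finset.mem_univ j))

private lemma zero_mem_of_coeffs {N m : ℕ} (a : Fin N → (Fin m → ℝ)) (c : Fin N → ℝ)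
    (hc0 : ∀ i, 0 ≤ c i) (hcs : 0 < ∑ i, c i) (h : ∑ i, c i • a i = 0) :
    (0 : Fin m → ℝ) ∈ convexHull ℝ (Set.range a) := by
  have := Finset.centerMass_mem_convexHull (Finset.univ) (fun i _ => hc0 i) hcs
    (fun i _ => Set.mem_range_self (f := a) i)
  rwa [Finset.centerMass, h, smul_zero] at this

private lemma zero_mem_hull_iff {N m : ℕ} (a : Fin N → (Fin m → ℝ)) :
    (0 : Fin m → ℝ) ∈ convexHull ℝ (Set.range a) ↔
      ∃ c : Fin N → ℝ, (∀ i, 0 ≤ c i) ∧ ∑ i, c i = 1 ∧ ∑ i, c i • a i = 0 := by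
  classical
  constructor
  · intro h
    rw [convexHull_range_eq_exists_affineCombination] at h
    obtain ⟨s, w, h0, h1, h2⟩ := h
    refine ⟨fun i => if i ∈ s then w i else 0, fun i => ?_, ?_, ?_⟩
    · show (0:ℝ) ≤ if i ∈ s then w i else 0
      split_ifs with hi
      exacts [h0 i hi, le_refl 0]
    · rw [Finset.sum_ite_mem, Finset.univ_inter]; exact h1
    · simp only [ite_smul, zero_smul, Finset.sum_ite_mem, Finset.univ_inter]
      rw [← Finset.affineCombination_eq_linear_combination s a w h1]
      exact h2
  · rintro ⟨c, hc0, hc1, hc2⟩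
    exact mem_convexHull_of_exists_fintype c a hc0 hc1 (fun i => Set.mem_range_self i) hc2

/-- Equivalence of: (i) `0 ∈ conv{a_1,…,a_N}`; (ii) the cone generated by the `q_i` is not
all of `ℝ^k`; (iii) `conv(S) = conv(S_+)`. -/
theorem zero_mem_convexHull_iff_cone_ne_univ_iff_conv_eq
    {N k m : ℕ} (hN : 1 ≤ N)
    (q : Fin N → (Fin k → ℝ)) (a : Fin N → (Fin m → ℝ))
    (hq : Submodule.span ℝ (Set.range q) = ⊤)
    (ha : Submodule.span ℝ (Set.range a) = ⊤)
    (hexact : ∀ c : Fin N → ℝ,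
      (∑ i, c i • a i = 0) ↔ ∃ lam : Fin k → ℝ, ∀ i, c i = ∑ j, q i j * lam j) :
    ((0 : Fin m → ℝ) ∈ convexHull ℝ (Set.range a) ↔ weightCone q ≠ Set.univ) ∧
    (weightCone q ≠ Set.univ ↔
      convexHull ℝ (latticeImage a) = convexHull ℝ (latticeImagePos a)) := by
  classical
  -- Basic facts about the cone
  have h0mem : (0 : Fin k → ℝ) ∈ weightCone q := ⟨0, fun i => le_refl 0, by simp⟩
  have hqmem : ∀ i, q i ∈ weightCone q := by
    intro i
    refine ⟨Pi.single i 1, fun j => ?_, ?_⟩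
    · by_cases h : j = i <;> simp [Pi.single_apply, h]
    · simp [Pi.single_apply, ite_smul]
  have hconv : Convex ℝ (weightCone q) := by
    rintro x ⟨t, ht, rfl⟩ y ⟨u, hu, rfl⟩ α β hα hβ hαβ
    exact ⟨fun i => α * t i + β * u i,
      fun i => add_nonneg (mul_nonneg hα (ht i)) (mul_nonneg hβ (hu i)),
      by simp [Finset.smul_sum, smul_smul, add_smul, Finset.sum_add_distrib]⟩
  have hsmulmem : ∀ (t : ℝ), 0 ≤ t → ∀ x ∈ weightCone q, t • x ∈ weightCone q := by
    rintro t ht x ⟨u, hu, rfl⟩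
    exact ⟨fun i => t * u i, fun i => mul_nonneg ht (hu i),
      by simp [Finset.smul_sum, smul_smul]⟩
  -- (i) ↔ D
  have h1 : (0 : Fin m → ℝ) ∈ convexHull ℝ (Set.range a) ↔
      ∃ lam : Fin k → ℝ, lam ≠ 0 ∧ ∀ i, 0 ≤ ∑ j, q i j * lam j := by
    constructor
    · intro h
      obtain ⟨c, hc0, hc1, hc2⟩ := (zero_mem_hull_iff a).mp h
      obtain ⟨lam, hlam⟩ := (hexact c).mp hc2
      refine ⟨lam, ?_, fun i => hlam i ▸ hc0 i⟩
      rintro rfl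
      simp [hlam] at hc1
    · rintro ⟨lam, hne, hpos⟩
      set s := ∑ i, ∑ j, q i j * lam j with hs
      have hs0 : 0 ≤ s := Finset.sum_nonneg fun i _ => hpos i
      have hsne : s ≠ 0 := by
        intro h0
        apply hne
        apply dot_zero_of_span hq
        intro i
        exact (Finset.sum_eq_zero_iff_of_nonneg (fun i _ => hpos i)).mp h0 i (Finset.mem_univ i)
      have hspos : 0 < s := lt_of_le_of_ne hs0 (Ne.symm hsne)
      refine zero_mem_of_coeffs a (fun i => ∑ j, q i j * lam j) hpos (by rw [← hs]; exact hspos) ?_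
      exact (hexact _).mpr ⟨lam, fun i => rfl⟩
  -- (ii) ↔ D
  have h2 : weightCone q ≠ Set.univ ↔
      ∃ lam : Fin k → ℝ, lam ≠ 0 ∧ ∀ i, 0 ≤ ∑ j, q i j * lam j := by
    constructor
    · intro hne
      -- the cone has nonempty interior
      have h2top : affineSpan ℝ (insert 0 (Set.range q)) = ⊤ := by
        refine SetLike.coe_injective ?_
        rw [affineSpan_insert_zero, hq]
        simp
      have hsub : insert (0 : Fin k → ℝ) (Set.range q) ⊆ weightCone q := by
        rintro x (rfl | ⟨i, rfl⟩)
        exacts [h0mem, hqmem i]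
      have hspan : affineSpan ℝ (weightCone q) = ⊤ :=
        eq_top_iff.mpr (h2top ▸ affineSpan_mono ℝ hsub)
      obtain ⟨x₀, hx₀⟩ := (hconv.interior_nonempty_iff_affineSpan_eq_top).mpr hspan
      have hclne : closure (weightCone q) ≠ Set.univ := by
        intro hcl
        apply hne
        ext y
        simp only [Set.mem_univ, iff_true]
        have hy2 : (2 : ℝ) • y - x₀ ∈ closure (weightCone q) := by rw [hcl]; trivial
        have hseg : y ∈ openSegment ℝ x₀ ((2 : ℝ) • y - x₀) :=
          ⟨1/2, 1/2, by norm_num, by norm_num, by norm_num, by module⟩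
        exact interior_subset (hconv.openSegment_interior_closure_subset_interior hx₀ hy2 hseg)
      obtain ⟨y, hy⟩ := (Set.ne_univ_iff_exists_notMem _).mp hclne
      obtain ⟨f, u, hfu, huy⟩ :=
        geometric_hahn_banach_closed_point hconv.closure isClosed_closure hy
      have hu0 : 0 < u := by
        have := hfu 0 (subset_closure h0mem)
        simpa using this
      have hfle : ∀ x ∈ weightCone q, f x ≤ 0 := by
        intro x hx
        by_contra hpos
        push_neg at hpos
        have ht : (0:ℝ) ≤ (u + 1) / f x := by positivity
        have hmem := hsmulmem _ ht x hx
        have hlt := hfu _ (subset_closure hmem)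
        rw [map_smul, smul_eq_mul, div_mul_cancel₀ _ (ne_of_gt hpos)] at hlt
        linarith
      set lam : Fin k → ℝ := fun j => -(f fun l => if j = l then 1 else 0) with hlam
      have hdelta : ∀ j, f (fun l => if j = l then 1 else 0) = -lam j := by
        intro j; simp [hlam]
      have hfx : ∀ x : Fin k → ℝ, f x = -∑ j, x j * lam j := by
        intro x
        have h := LinearMap.pi_apply_eq_sum_univ (f.toLinearMap) x
        simp only [ContinuousLinearMap.coe_coe] at h
        rw [h]
        simp only [hdelta, smul_eq_mul, mul_neg]
        rw [Finset.sum_neg_distrib]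
      refine ⟨lam, ?_, ?_⟩
      · intro h0
        have hy0 : f y = 0 := by rw [hfx y, h0]; simp
        linarith
      · intro i
        have h := hfle (q i) (hqmem i)
        rw [hfx (q i)] at h
        linarith
    · rintro ⟨lam, hne, hpos⟩ h
      have hmem : -lam ∈ weightCone q := h ▸ Set.mem_univ _
      obtain ⟨t, ht, heq⟩ := hmem
      have hsum := congrArg (fun x : Fin k → ℝ => ∑ j, x j * lam j) heq
      have hL : ∑ j, (-lam) j * lam j = -∑ j, lam j * lam j := by
        simp [neg_mul, Finset.sum_neg_distrib]
      have hR : ∑ j, (∑ i, t i • q i) j * lam j = ∑ i, t i * ∑ j, q i j * lam j := by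
        simp only [Finset.sum_apply, Pi.smul_apply, smul_eq_mul, Finset.sum_mul]
        rw [Finset.sum_comm]
        exact Finset.sum_congr rfl fun i _ => by
          rw [Finset.mul_sum]
          exact Finset.sum_congr rfl fun j _ => by ring
      rw [hL, hR] at hsum
      have hRpos : 0 ≤ ∑ i, t i * ∑ j, q i j * lam j :=
        Finset.sum_nonneg fun i _ => mul_nonneg (ht i) (hpos i)
      have hLpos : 0 < ∑ j, lam j * lam j := by
        obtain ⟨j, hj⟩ := Function.ne_iff.mp hne
        exact Finset.sum_pos' (fun j _ => mul_self_nonneg _)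
          ⟨j, Finset.mem_univ j, mul_self_pos.mpr hj⟩
      linarith
  -- (i) ↔ (iii)
  have h3 : (0 : Fin m → ℝ) ∈ convexHull ℝ (Set.range a) ↔
      convexHull ℝ (latticeImage a) = convexHull ℝ (latticeImagePos a) := by
    have hsubset : latticeImagePos a ⊆ latticeImage a := by
      rintro x ⟨v, _, hv⟩; exact ⟨v, hv⟩
    have hrange : Set.range a ⊆ latticeImagePos a := by
      rintro x ⟨i, rfl⟩
      refine ⟨Pi.single i 1, ?_, ?_⟩
      · intro h
        have := congrFun h i
        simp at this
      · have : ∀ j, ((Pi.single i 1 : Fin N → ℕ) j : ℝ) = if j = i then 1 else 0 := by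
          intro j
          simp [Pi.single_apply]
        simp only [this, ite_smul, one_smul, zero_smul]
        simp
    constructor
    · intro h0
      have h0' : (0 : Fin m → ℝ) ∈ convexHull ℝ (latticeImagePos a) :=
        convexHull_mono hrange h0
      refine Set.Subset.antisymm ?_ (convexHull_mono hsubset)
      refine convexHull_min ?_ (convex_convexHull ℝ _)
      rintro x ⟨v, rfl⟩
      by_cases hv : v = 0
      · subst hv
        simpa using h0'
      · exact subset_convexHull ℝ _ ⟨v, hv, rfl⟩
    · intro heq
      have h0S : (0 : Fin m → ℝ) ∈ convexHull ℝ (latticeImagePos a) := by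
        rw [← heq]
        exact subset_convexHull ℝ _ ⟨0, by simp⟩
      rw [mem_convexHull_iff_exists_fintype] at h0S
      obtain ⟨ι, hι, w, z, hw0, hw1, hz, hzero⟩ := h0S
      choose v hvne hv using hz
      set c : Fin N → ℝ := fun i => ∑ p, w p * (v p i : ℝ) with hc
      have hc0 : ∀ i, 0 ≤ c i :=
        fun i => Finset.sum_nonneg fun p _ => mul_nonneg (hw0 p) (Nat.cast_nonneg _)
      have hcs : ∑ i, c i • a i = 0 := by
        calc ∑ i, c i • a i = ∑ i, ∑ p, (w p * (v p i : ℝ)) • a i := by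
              simp only [hc, Finset.sum_smul]
          _ = ∑ p, ∑ i, (w p * (v p i : ℝ)) • a i := Finset.sum_comm
          _ = ∑ p, w p • ∑ i, ((v p i : ℝ)) • a i := by
              simp [Finset.smul_sum, smul_smul]
          _ = ∑ p, w p • z p := by
              exact Finset.sum_congr rfl fun p _ => by rw [← hv p]
          _ = 0 := hzero
      have hone : (1 : ℝ) ≤ ∑ i, c i := by
        have hp1 : ∀ p, (1 : ℝ) ≤ ∑ i, (v p i : ℝ) := by
          intro p
          have h1 : (1 : ℕ) ≤ ∑ i, v p i := by
            rw [Nat.one_le_iff_ne_zero]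
            intro hsum0
            apply hvne p
            funext i
            exact (Finset.sum_eq_zero_iff.mp hsum0) i (Finset.mem_univ i)
          exact_mod_cast h1
        calc (1 : ℝ) = ∑ p, w p := hw1.symm
          _ ≤ ∑ p, w p * ∑ i, (v p i : ℝ) :=
              Finset.sum_le_sum fun p _ => le_mul_of_one_le_right (hw0 p) (hp1 p)
          _ = ∑ i, c i := by
              simp only [hc, Finset.mul_sum]
              exact Finset.sum_comm
      exact zero_mem_of_coeffs a c hc0 (lt_of_lt_of_le one_pos hone) hcs
  exact ⟨h1.trans h2.symm, h2.trans (h1.symm.trans h3)⟩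
end

section
/- Let q_1, …, q_N ∈ ℤ^k and let the torus T = (ℂ*)^k act on ℂ^N by t · z = (t^{q_1} z_1, …, t^{q_N} z_N), where t^{q_i} = Π_{j=1}^k t_j^{q_{ij}}. Define the moment map μ: ℂ^N → ℝ^k by μ(z) = Σ_{i=1}^N |z_i|² q_i. Then for every z ∈ ℂ^N and c ∈ ℝ^k, the closure of the orbit T·z in ℂ^N (Euclidean topology) meets μ^{-1}(c) if and only if c lies in the convex cone generated by { q_i : z_i ≠ 0 }. -/
/-!
Kempf–Ness argument. With `a i = ‖z i‖²`, the moment map at the orbit point `exp (u / 2) · z` is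
the gradient of the convex function `f u = ∑ i, a i * exp ⟪u, q i⟫ - ⟪u, c⟫`, so a minimum of `f`
on the span of the weights active on `z` yields a point of `T · z` in `μ⁻¹(c)`. Such a minimum
exists when the sublevel set `{f ≤ f 0}` of that span is bounded. Otherwise the sublevel set
contains a ray `t • v`, which forces `⟪v, q i⟫ ≤ 0` on the active weights, strictly for one of
them, and `⟪v, c⟫ ≥ 0`; writing `c` in the cone shows that `⟪v, q i⟫ = 0` wherever its coefficient
is nonzero. The limit of `exp (t v) · z` as `t → ∞` then lies in the orbit closure, has strictly
smaller support, and still has `c` in its cone, so induction on the support applies.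
-/

open Filter Topology Real Set

theorem tendsto_mul_exp_mul_sub_mul_atTop {a x : ℝ} (ha : 0 < a) (hx : 0 < x) (d : ℝ) :
    Tendsto (fun t => a * exp (t * x) - t * d) atTop atTop := by
  have hquad : Tendsto (fun t => t * (a * x ^ 2 / 2 * t - d)) atTop atTop :=
    tendsto_id.atTop_mul_atTop₀ (tendsto_atTop_add_const_right _ (-d)
      (tendsto_id.const_mul_atTop (by positivity)))
  refine tendsto_atTop_mono' _ ?_ hquad
  filter_upwards [eventually_ge_atTop 0] with t ht
  nlinarith [quadratic_le_exp_of_nonneg (mul_nonneg ht hx.le), mul_nonneg ht hx.le]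

theorem exists_ray_subset_of_not_isBounded {E : Type*} [NormedAddCommGroup E]
    [NormedSpace ℝ E] [ProperSpace E] {K : Set E} (hK : IsClosed K)
    (hstar : StarConvex ℝ 0 K) (hunb : ¬Bornology.IsBounded K) :
    ∃ v : E, v ≠ 0 ∧ ∀ t : ℝ, 0 ≤ t → t • v ∈ K := by
  have hfar : ∀ r : ℝ, ∃ u ∈ K, r < ‖u‖ := by
    simpa [isBounded_iff_forall_norm_le] using hunb
  choose u huK hu using fun m : ℕ => hfar m
  have hu_pos (m : ℕ) : 0 < ‖u m‖ := (Nat.cast_nonneg m).trans_lt (hu m)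
  obtain ⟨v, hv, φ, hφ, hlim⟩ := (isCompact_sphere (0 : E) 1).tendsto_subseq
    (x := fun m => ‖u m‖⁻¹ • u m) fun m => by
      simp [norm_smul, (hu_pos m).ne']
  refine ⟨v, ne_zero_of_mem_unit_sphere ⟨v, hv⟩, fun t ht => ?_⟩
  refine hK.mem_of_tendsto (hlim.const_smul t) ?_
  filter_upwards [eventually_ge_atTop ⌈t⌉₊] with m hm
  have hle : t ≤ ‖u (φ m)‖ := calc
    t ≤ ⌈t⌉₊ := Nat.le_ceil t
    _ ≤ m := by exact_mod_cast hm
    _ ≤ φ m := by exact_mod_cast hφ.le_apply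
    _ ≤ ‖u (φ m)‖ := (hu (φ m)).le
  simp only [Function.comp_apply, smul_smul]
  exact hstar.smul_mem (huK (φ m)) (by positivity) ((div_le_one (hu_pos _)).2 hle)

section KempfNess

variable {ι n : Type*}

noncomputable def expMoment [Fintype ι] [Fintype n] (a : ι → ℝ) (p : ι → n → ℝ) (u : n → ℝ) :
    n → ℝ :=
  ∑ i, (a i * exp (u ⬝ᵥ p i)) • p i

noncomputable def kempfNess [Fintype ι] [Fintype n] (a : ι → ℝ) (p : ι → n → ℝ) (c u : n → ℝ) : ℝ :=
  ∑ i, a i * exp (u ⬝ᵥ p i) - u ⬝ᵥ c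

variable (a : ι → ℝ) (p : ι → n → ℝ) (c : n → ℝ)

theorem continuous_kempfNess [Fintype ι] [Fintype n] : Continuous (kempfNess a p c) := by
  unfold kempfNess
  fun_prop

theorem convexOn_kempfNess [Fintype ι] [Fintype n] (ha : ∀ i, 0 ≤ a i) :
    ConvexOn ℝ univ (kempfNess a p c) := by
  have hterm (i : ι) : ConvexOn ℝ univ fun u : n → ℝ => a i * exp (u ⬝ᵥ p i) :=
    (convexOn_exp.comp_linearMap ((dotProductBilin ℝ ℝ).flip (p i))).smul (ha i)
  have hsum : ConvexOn ℝ univ (∑ i, fun u : n → ℝ => a i * exp (u ⬝ᵥ p i)) :=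
    Finset.sum_induction _ (ConvexOn ℝ univ) (fun _ _ => ConvexOn.add)
      (convexOn_const 0 convex_univ) fun i _ => hterm i
  refine (hsum.sub (((dotProductBilin ℝ ℝ).flip c).concaveOn convex_univ)).congr fun u _ => ?_
  simp [kempfNess]

theorem kempfNess_smul [Fintype ι] [Fintype n] (t : ℝ) (v : n → ℝ) :
    kempfNess a p c (t • v) = ∑ i, a i * exp (t * (v ⬝ᵥ p i)) - t * (v ⬝ᵥ c) := by
  simp only [kempfNess, smul_dotProduct, smul_eq_mul]

theorem hasDerivAt_kempfNess_line [Fintype ι] [Fintype n] (u w : n → ℝ) :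
    HasDerivAt (fun t : ℝ => kempfNess a p c (u + t • w))
      ((expMoment a p u - c) ⬝ᵥ w) 0 := by
  have hline : (fun t : ℝ => kempfNess a p c (u + t • w)) = fun t =>
      ∑ i, a i * exp (u ⬝ᵥ p i + t * (w ⬝ᵥ p i)) - (u ⬝ᵥ c + t * (w ⬝ᵥ c)) := by
    ext t
    simp only [kempfNess, add_dotProduct, smul_dotProduct, smul_eq_mul]
  have hval : (expMoment a p u - c) ⬝ᵥ w =
      ∑ i, a i * (exp (u ⬝ᵥ p i + 0 * (w ⬝ᵥ p i)) * (1 * (w ⬝ᵥ p i))) - 1 * (w ⬝ᵥ c) := by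
    simp [expMoment, sum_dotProduct, mul_assoc, dotProduct_comm w]
  rw [hline, hval]
  exact (HasDerivAt.fun_sum fun i _ => ((hasDerivAt_id' (x := (0 : ℝ))).mul_const (w ⬝ᵥ p i)
    |>.const_add (u ⬝ᵥ p i) |>.exp |>.const_mul (a i))).fun_sub
    ((hasDerivAt_id' (x := (0 : ℝ))).mul_const (w ⬝ᵥ c) |>.const_add (u ⬝ᵥ c))

def supportSpan : Submodule ℝ (n → ℝ) :=
  Submodule.span ℝ (p '' {i | a i ≠ 0})

theorem sum_smul_mem_supportSpan [Fintype ι] {s : ι → ℝ} (hs : ∀ i, a i = 0 → s i = 0) :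
    ∑ i, s i • p i ∈ supportSpan a p := by
  refine Submodule.sum_mem _ fun i _ => ?_
  by_cases hai : a i = 0
  · simp [hs i hai]
  · exact Submodule.smul_mem _ _ (Submodule.subset_span ⟨i, hai, rfl⟩)

theorem expMoment_mem_supportSpan [Fintype ι] [Fintype n] (u : n → ℝ) :
    expMoment a p u ∈ supportSpan a p :=
  sum_smul_mem_supportSpan a p fun i hai => by simp [hai]

theorem eq_zero_of_mem_supportSpan [Fintype n] {v : n → ℝ} (hv : v ∈ supportSpan a p)
    (horth : ∀ i, a i ≠ 0 → v ⬝ᵥ p i = 0) : v = 0 := by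
  have hker : supportSpan a p ≤ LinearMap.ker (dotProductBilin ℝ ℝ v) := by
    rw [supportSpan, Submodule.span_le]
    rintro _ ⟨i, hi, rfl⟩
    exact horth i hi
  exact dotProduct_self_eq_zero.1 (hker hv)

theorem expMoment_eq_of_isMinOn [Fintype ι] [Fintype n] {u : n → ℝ} (hc : c ∈ supportSpan a p)
    (hu : u ∈ supportSpan a p) (hmin : IsMinOn (kempfNess a p c) (supportSpan a p) u) :
    expMoment a p u = c := by
  set g := expMoment a p u - c
  have hg : g ∈ supportSpan a p := Submodule.sub_mem _ (expMoment_mem_supportSpan a p u) hc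
  have hline : IsLocalMin (fun t : ℝ => kempfNess a p c (u + t • g)) 0 :=
    Eventually.of_forall fun t => by
      simpa using hmin (Submodule.add_mem _ hu (Submodule.smul_mem _ t hg))
  exact sub_eq_zero.1 (dotProduct_self_eq_zero.1 (hline.hasDerivAt_eq_zero
    (hasDerivAt_kempfNess_line a p c u g)))

theorem dotProduct_nonpos_of_kempfNess_ray_le [Fintype ι] [Fintype n] (ha : ∀ i, 0 ≤ a i)
    {v : n → ℝ} (hray : ∀ t : ℝ, 0 ≤ t → kempfNess a p c (t • v) ≤ kempfNess a p c 0) :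
    (∀ i, a i ≠ 0 → v ⬝ᵥ p i ≤ 0) ∧ 0 ≤ v ⬝ᵥ c := by
  have hterm_nonneg (t : ℝ) (i : ι) : 0 ≤ a i * exp (t * (v ⬝ᵥ p i)) :=
    mul_nonneg (ha i) (exp_nonneg _)
  have hbounded {g : ℝ → ℝ} (hg : Tendsto g atTop atTop)
      (hle : ∀ t, g t ≤ kempfNess a p c (t • v)) : False := by
    obtain ⟨t, hgt, ht⟩ := ((hg.eventually_gt_atTop (kempfNess a p c 0)).and
      (eventually_ge_atTop 0)).exists
    exact (hgt.trans_le (hle t)).not_ge (hray t ht)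
  constructor
  · intro i hai
    by_contra! hpos
    refine hbounded (tendsto_mul_exp_mul_sub_mul_atTop
      ((ha i).lt_of_ne' hai) hpos (v ⬝ᵥ c)) fun t => ?_
    rw [kempfNess_smul]
    gcongr
    exact Finset.single_le_sum (fun j _ => hterm_nonneg t j) (Finset.mem_univ i)
  · by_contra! hneg
    refine hbounded (tendsto_id.atTop_mul_const (neg_pos.2 hneg)) fun t => ?_
    rw [kempfNess_smul, id, mul_neg, neg_eq_zero_sub]
    gcongr
    exact Finset.sum_nonneg fun j _ => hterm_nonneg t j

theorem exists_expMoment_eq_or_exists_kempfNess_ray [Fintype ι] [Fintype n]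
    (ha : ∀ i, 0 ≤ a i) (hc : c ∈ supportSpan a p) :
    (∃ u, expMoment a p u = c) ∨ ∃ v ∈ supportSpan a p, v ≠ 0 ∧
      ∀ t : ℝ, 0 ≤ t → kempfNess a p c (t • v) ≤ kempfNess a p c 0 := by
  set P := supportSpan a p
  set f := kempfNess a p c
  set K := {u ∈ (P : Set (n → ℝ)) | f u ≤ f 0}
  have hK : IsClosed K :=
    P.closed_of_finiteDimensional.inter (isClosed_le (continuous_kempfNess a p c) continuous_const)
  have h0K : (0 : n → ℝ) ∈ K := ⟨P.zero_mem, le_rfl⟩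
  by_cases hbdd : Bornology.IsBounded K
  · left
    obtain ⟨u, ⟨huP, hu0⟩, hmin⟩ := (Metric.isCompact_of_isClosed_isBounded hK hbdd).exists_isMinOn
      ⟨0, h0K⟩ (continuous_kempfNess a p c).continuousOn
    refine ⟨u, expMoment_eq_of_isMinOn a p c hc huP fun x hxP => ?_⟩
    by_cases hx : f x ≤ f 0
    · exact hmin ⟨hxP, hx⟩
    · exact hu0.trans (not_le.1 hx).le
  · right
    have hstar : StarConvex ℝ 0 K :=
      (((convexOn_kempfNess a p c ha).subset (subset_univ _) P.convex).convex_le (f 0)).starConvex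
        h0K
    obtain ⟨v, hv0, hray⟩ := exists_ray_subset_of_not_isBounded hK hstar hbdd
    exact ⟨v, by simpa using (hray 1 zero_le_one).1, hv0, fun t ht => (hray t ht).2⟩

theorem dotProduct_eq_zero_of_nonneg_dotProduct_sum [Fintype ι] [Fintype n] {s : ι → ℝ}
    {v : n → ℝ} (hs : ∀ i, 0 ≤ s i) (hvp : ∀ i, s i ≠ 0 → v ⬝ᵥ p i ≤ 0)
    (hvc : 0 ≤ v ⬝ᵥ ∑ i, s i • p i) (i : ι) (hsi : s i ≠ 0) : v ⬝ᵥ p i = 0 := by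
  have hterm (j : ι) (_ : j ∈ Finset.univ) : s j * (v ⬝ᵥ p j) ≤ 0 := by
    by_cases hsj : s j = 0
    · simp [hsj]
    · exact mul_nonpos_of_nonneg_of_nonpos (hs j) (hvp j hsj)
  rw [dotProduct_sum] at hvc
  simp only [dotProduct_smul, smul_eq_mul] at hvc
  have hzero := (Finset.sum_eq_zero_iff_of_nonpos hterm).1
    (le_antisymm (Finset.sum_nonpos hterm) hvc) i (Finset.mem_univ i)
  exact (mul_eq_zero.1 hzero).resolve_left hsi

theorem exists_expMoment_eq_or_exists_destabilizing [Fintype ι] [Fintype n]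
    (ha : ∀ i, 0 ≤ a i) {s : ι → ℝ} (hs : ∀ i, 0 ≤ s i) (hsa : ∀ i, a i = 0 → s i = 0)
    (hc : c = ∑ i, s i • p i) :
    (∃ u, expMoment a p u = c) ∨ ∃ v : n → ℝ, (∀ i, a i ≠ 0 → v ⬝ᵥ p i ≤ 0) ∧
      (∃ i, a i ≠ 0 ∧ v ⬝ᵥ p i ≠ 0) ∧ ∀ i, s i ≠ 0 → v ⬝ᵥ p i = 0 := by
  have hcP : c ∈ supportSpan a p := hc ▸ sum_smul_mem_supportSpan a p hsa
  refine (exists_expMoment_eq_or_exists_kempfNess_ray a p c ha hcP).imp_right ?_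
  rintro ⟨v, hvP, hv0, hray⟩
  obtain ⟨hvp, hvc⟩ := dotProduct_nonpos_of_kempfNess_ray_le a p c ha hray
  refine ⟨v, hvp, ?_, dotProduct_eq_zero_of_nonneg_dotProduct_sum p hs
    (fun i hsi => hvp i fun hai => hsi (hsa i hai)) (hc ▸ hvc)⟩
  by_contra! horth
  exact hv0 (eq_zero_of_mem_supportSpan a p hvP horth)

end KempfNess

section TorusAction

variable {ι κ : Type*}

def weight (q : ι → κ → ℤ) (i : ι) : κ → ℝ := fun j => (q i j : ℝ)

def torusOrbit [Fintype κ] (q : ι → κ → ℤ) (z : ι → ℂ) : Set (ι → ℂ) :=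
  {w | ∃ t : κ → ℂˣ, w = fun i => (∏ j, (t j : ℂ) ^ (q i j)) * z i}

noncomputable def momentMap [Fintype ι] (q : ι → κ → ℤ) (w : ι → ℂ) : κ → ℝ :=
  ∑ i, ‖w i‖ ^ 2 • weight q i

variable (q : ι → κ → ℤ)

theorem prod_ofReal_exp_zpow [Fintype κ] (u : κ → ℝ) (i : ι) :
    ∏ j, ((exp (u j) : ℂ)) ^ (q i j) = exp (u ⬝ᵥ weight q i) := by
  simp_rw [Complex.ofReal_exp, ← Complex.exp_int_mul, ← Complex.exp_sum, dotProduct, weight]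
  push_cast
  simp_rw [mul_comm]

theorem exp_smul_mem_torusOrbit [Fintype κ] (z : ι → ℂ) (u : κ → ℝ) :
    (fun i => (exp (u ⬝ᵥ weight q i) : ℂ) * z i) ∈ torusOrbit q z :=
  ⟨fun j => Units.mk0 _ (Complex.ofReal_ne_zero.2 (exp_ne_zero (u j))), by
    ext i
    rw [← prod_ofReal_exp_zpow]
    rfl⟩

theorem momentMap_exp_smul [Fintype ι] [Fintype κ] (z : ι → ℂ) (u : κ → ℝ) :
    momentMap q (fun i => (exp (u ⬝ᵥ weight q i) : ℂ) * z i) =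
      expMoment (fun i => ‖z i‖ ^ 2) (weight q) ((2 : ℝ) • u) := by
  refine Finset.sum_congr rfl fun i _ => ?_
  have hexp : exp (u ⬝ᵥ weight q i) ^ 2 = exp (((2 : ℝ) • u) ⬝ᵥ weight q i) := by
    rw [smul_dotProduct, ← exp_nat_mul]
    norm_num
  rw [norm_mul, Complex.norm_real, norm_of_nonneg (exp_pos _).le, mul_pow, hexp, mul_comm]

theorem apply_eq_zero_of_mem_closure_torusOrbit [Fintype κ] {z w : ι → ℂ}
    (hw : w ∈ closure (torusOrbit q z)) {i : ι} (hzi : z i = 0) : w i = 0 := by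
  have hsub : closure (torusOrbit q z) ⊆ {w | w i = 0} := by
    refine closure_minimal ?_ (isClosed_eq (continuous_apply i) continuous_const)
    rintro _ ⟨t, rfl⟩
    simp [hzi]
  exact hsub hw

theorem closure_torusOrbit_subset [Fintype κ] {z z' : ι → ℂ}
    (hz' : z' ∈ closure (torusOrbit q z)) :
    closure (torusOrbit q z') ⊆ closure (torusOrbit q z) := by
  refine closure_minimal ?_ isClosed_closure
  rintro _ ⟨t, rfl⟩
  set act : (ι → ℂ) → (ι → ℂ) := fun w i => (∏ j, (t j : ℂ) ^ (q i j)) * w i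
  have hact : Continuous act := continuous_pi fun i => continuous_const.mul (continuous_apply i)
  have hmaps : MapsTo act (torusOrbit q z) (torusOrbit q z) := by
    rintro _ ⟨s, rfl⟩
    refine ⟨t * s, ?_⟩
    ext i
    simp only [act, Pi.mul_apply, Units.val_mul, mul_zpow, Finset.prod_mul_distrib]
    ring
  exact map_mem_closure hact hz' hmaps

theorem truncation_mem_closure_torusOrbit [Fintype κ] (z : ι → ℂ) {v : κ → ℝ}
    (hv : ∀ i, z i ≠ 0 → v ⬝ᵥ weight q i ≤ 0) :
    (fun i => if v ⬝ᵥ weight q i = 0 then z i else 0) ∈ closure (torusOrbit q z) := by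
  refine mem_closure_of_tendsto (f := fun t : ℝ => fun i => (exp ((t • v) ⬝ᵥ weight q i) : ℂ) * z i)
    (b := atTop) ?_ (Eventually.of_forall fun t => exp_smul_mem_torusOrbit q z (t • v))
  refine tendsto_pi_nhds.2 fun i => ?_
  simp only [smul_dotProduct, smul_eq_mul]
  by_cases hzi : z i = 0
  · simp [hzi]
  by_cases hvi : v ⬝ᵥ weight q i = 0
  · simp [hvi]
  have hdecay : Tendsto (fun t : ℝ => exp (t * (v ⬝ᵥ weight q i))) atTop (𝓝 0) :=
    tendsto_exp_atBot.comp (tendsto_id.atTop_mul_const_of_neg ((hv i hzi).lt_of_ne hvi))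
  simpa [hvi] using ((Complex.continuous_ofReal.tendsto 0).comp hdecay).mul_const (z i)

theorem exists_mem_closure_torusOrbit_momentMap_eq [Fintype ι] [Fintype κ] (z : ι → ℂ)
    {c : κ → ℝ} {s : ι → ℝ} (hs : ∀ i, 0 ≤ s i) (hsz : ∀ i, z i = 0 → s i = 0)
    (hc : c = ∑ i, s i • weight q i) :
    ∃ w ∈ closure (torusOrbit q z), momentMap q w = c := by
  have hnorm (i : ι) : ‖z i‖ ^ 2 = 0 ↔ z i = 0 := by simp
  rcases exists_expMoment_eq_or_exists_destabilizing (fun i => ‖z i‖ ^ 2) (weight q) c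
      (fun i => by positivity) hs (fun i hi => hsz i ((hnorm i).1 hi)) hc with
    ⟨u, hu⟩ | ⟨v, hvp, ⟨i₀, hzi₀, hvi₀⟩, hvs⟩
  · refine ⟨_, subset_closure (exp_smul_mem_torusOrbit q z ((2 : ℝ)⁻¹ • u)), ?_⟩
    rw [momentMap_exp_smul, smul_inv_smul₀ two_ne_zero, hu]
  set z' := fun i => if v ⬝ᵥ weight q i = 0 then z i else 0
  have hz' : z' ∈ closure (torusOrbit q z) :=
    truncation_mem_closure_torusOrbit q z fun i hzi => hvp i (mt (hnorm i).1 hzi)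
  have hsz' (i : ι) (hzi' : z' i = 0) : s i = 0 := by
    by_contra hsi
    have hzi : z i ≠ 0 := mt (hsz i) hsi
    simp [z', hvs i hsi, hzi] at hzi'
  have hfewer : (Finset.univ.filter fun i => z' i ≠ 0).card <
      (Finset.univ.filter fun i => z i ≠ 0).card := by
    have hsub : (Finset.univ.filter fun i => z' i ≠ 0) ⊆ Finset.univ.filter fun i => z i ≠ 0 :=
      Finset.monotone_filter_right _ fun i hi => by simp_all [z']
    refine Finset.card_lt_card ((Finset.ssubset_iff_of_subset hsub).2 ⟨i₀, ?_, ?_⟩) <;>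
      simp_all [z']
  obtain ⟨w, hw, hμ⟩ := exists_mem_closure_torusOrbit_momentMap_eq z' hs hsz' hc
  exact ⟨w, closure_torusOrbit_subset q hz' hw, hμ⟩
termination_by (Finset.univ.filter fun i => z i ≠ 0).card
decreasing_by exact hfewer

end TorusAction

/-- The torus `T = (ℂ*)^k` acts on `ℂ^N` by `t · z = (t^{q_1} z_1, …, t^{q_N} z_N)` where
`t^{q_i} = ∏_j t_j ^ q_{ij}`; with moment map `μ(z) = ∑ i ‖z i‖² q i`, the closure of the
orbit `T·z` meets `μ⁻¹(c)` iff `c` lies in the convex cone generated by the `q i` with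
`z i ≠ 0`. -/
theorem orbitClosure_meets_momentFiber_iff
    {N k : ℕ} (q : Fin N → Fin k → ℤ) (z : Fin N → ℂ) (c : Fin k → ℝ) :
    (closure {w : Fin N → ℂ |
        ∃ t : Fin k → ℂˣ, w = fun i => (∏ j, (t j : ℂ) ^ (q i j)) * z i}
      ∩ {w : Fin N → ℂ | ∑ i, ‖w i‖ ^ 2 • (fun j => (q i j : ℝ)) = c}).Nonempty
    ↔ ∃ s : Fin N → ℝ, (∀ i, 0 ≤ s i) ∧ (∀ i, z i = 0 → s i = 0) ∧
        c = ∑ i, s i • (fun j => (q i j : ℝ)) := by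
  constructor
  · rintro ⟨w, hw, hμ⟩
    refine ⟨fun i => ‖w i‖ ^ 2, fun i => by positivity, fun i hzi => ?_, hμ.symm⟩
    simp [apply_eq_zero_of_mem_closure_torusOrbit q hw hzi]
  · rintro ⟨s, hs, hsz, hc⟩
    exact exists_mem_closure_torusOrbit_momentMap_eq q z hs hsz hc
end
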